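/- arXiv:1211.2497 — 3 statements merged into one kernel-verified Lean document; each statement's English description precedes it below -/
import Mathlib

section
/- For all natural numbers n and k with k ≤ n and 0 < k < n, log₂(C(n,k)) ≤ n·H₂(k/n), where C(n,k) is the binomial coefficient and H₂(p) = -p·log₂(p) - (1-p)·log₂(1-p) is the binary entropy function. -/
open Real

/-
Each term of the binomial expansion of `(p + (1 - p)) ^ n = 1` is at most `1`, so
`C(n, k) ≤ p⁻ᵏ (1 - p)⁻⁽ⁿ⁻ᵏ⁾` for every `p ∈ (0, 1)`; taking `log₂` and choosing `p = k / n`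
turns the right-hand side into `n · H₂(k / n)`.
-/

theorem Nat.choose_mul_pow_mul_pow_le_add_pow {R : Type*} [CommSemiring R] [PartialOrder R]
    [IsOrderedRing R] {p q : R} (hp : 0 ≤ p) (hq : 0 ≤ q) {n k : ℕ} (hkn : k ≤ n) :
    n.choose k * (p ^ k * q ^ (n - k)) ≤ (p + q) ^ n := by
  rw [add_pow, mul_comm]
  exact Finset.single_le_sum (f := fun i => p ^ i * q ^ (n - i) * n.choose i)
    (fun i _ => by positivity) (Finset.mem_range.mpr (Nat.lt_succ_of_le hkn))

theorem Real.logb_choose_le {n k : ℕ} (hkn : k ≤ n) {p : ℝ} (hp0 : 0 < p) (hp1 : p < 1) :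
    logb 2 (n.choose k) ≤ -k * logb 2 p - (n - k) * logb 2 (1 - p) := by
  have hchoose : (0 : ℝ) < n.choose k := mod_cast Nat.choose_pos hkn
  have hq : 0 < 1 - p := sub_pos.mpr hp1
  have hterm : (n.choose k : ℝ) * (p ^ k * (1 - p) ^ (n - k)) ≤ 1 := by
    simpa using Nat.choose_mul_pow_mul_pow_le_add_pow hp0.le hq.le hkn
  have hlog := logb_nonpos (b := 2) one_lt_two (by positivity) hterm
  rw [logb_mul hchoose.ne' (by positivity), logb_mul (by positivity) (by positivity),
    logb_pow, logb_pow, Nat.cast_sub hkn] at hlog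
  linarith

/-- log₂ C(n,k) ≤ n·H₂(k/n) for 0 < k < n. -/
theorem stmt_0 (n k : ℕ) (hk : 0 < k) (hkn : k < n) :
    Real.logb 2 (n.choose k) ≤
      (n : ℝ) * (-(k / n : ℝ) * Real.logb 2 (k / n)
        - (1 - (k / n : ℝ)) * Real.logb 2 (1 - (k / n : ℝ))) := by
  have hn : (0 : ℝ) < n := mod_cast hk.trans hkn
  have hp0 : (0 : ℝ) < k / n := by positivity
  have hp1 : (k / n : ℝ) < 1 := (div_lt_one hn).mpr (mod_cast hkn)
  have hnp : (n : ℝ) * (k / n) = k := mul_div_cancel₀ _ hn.ne'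
  calc logb 2 (n.choose k)
      ≤ -k * logb 2 (k / n) - (n - k) * logb 2 (1 - k / n) := logb_choose_le hkn.le hp0 hp1
    _ = _ := by linear_combination (logb 2 (k / n) - logb 2 (1 - k / n)) * hnp
end

section
/- For every real a > 0 and b > 0, the function x ↦ (a(b-x)+x)·log(a(b-x)+x) - a(b-x)·log(a(b-x)) - x·log(x) is concave on the open interval (0, b). -/
/-!
With `φ t = t log t`, the function is `φ (u + v) - φ u - φ v` for the affine maps
`u x = a (b - x)` and `v x = x`. Along any pair of affine maps with slopes `p, q`, the second
derivative of this expression is `(p + q)² / (u + v) - p² / u - q² / v`, which is nonpositive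
where `u, v > 0` by the two-term case of Sedrakyan's (Cauchy–Schwarz) inequality.
-/

open Real Set

lemma add_sq_div_add_le {u v : ℝ} (hu : 0 < u) (hv : 0 < v) (p q : ℝ) :
    (p + q) ^ 2 / (u + v) ≤ p ^ 2 / u + q ^ 2 / v := by
  simpa [Fin.sum_univ_two] using Finset.sq_sum_div_le_sum_sq_div Finset.univ ![p, q]
    (g := ![u, v]) (by simp [Fin.forall_fin_two, hu, hv])

lemma HasDerivAt.mul_log {u : ℝ → ℝ} {p x : ℝ} (hu : HasDerivAt u p x) (hx : u x ≠ 0) :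
    HasDerivAt (fun y => u y * Real.log (u y)) (p * (Real.log (u x) + 1)) x :=
  ((hasDerivAt_mul_log hx).comp x hu).congr_deriv (mul_comm _ _)

lemma HasDerivAt.const_mul_log_add_one {u : ℝ → ℝ} {p x : ℝ} (hu : HasDerivAt u p x)
    (hx : u x ≠ 0) : HasDerivAt (fun y => p * (Real.log (u y) + 1)) (p ^ 2 / u x) x :=
  (((hu.log hx).add_const 1).const_mul p).congr_deriv (by ring)

theorem concaveOn_mul_log_add_sub_mul_log_sub_mul_log {D : Set ℝ} (hD : Convex ℝ D)
    {u v : ℝ → ℝ} {p q : ℝ} (hu : ∀ x, HasDerivAt u p x) (hv : ∀ x, HasDerivAt v q x)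
    (hu₀ : ∀ x ∈ interior D, 0 < u x) (hv₀ : ∀ x ∈ interior D, 0 < v x) :
    ConcaveOn ℝ D fun x => (u x + v x) * log (u x + v x) - u x * log (u x) - v x * log (v x) := by
  have hu_cont : Continuous u := continuous_iff_continuousAt.2 fun x => (hu x).continuousAt
  have hv_cont : Continuous v := continuous_iff_continuousAt.2 fun x => (hv x).continuousAt
  refine concaveOn_of_hasDerivWithinAt2_nonpos hD (f' := fun x =>
      (p + q) * (log (u x + v x) + 1) - p * (log (u x) + 1) - q * (log (v x) + 1))
    (f'' := fun x => (p + q) ^ 2 / (u x + v x) - p ^ 2 / u x - q ^ 2 / v x)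
    (by fun_prop) (fun x hx => ?_) (fun x hx => ?_) (fun x hx => ?_)
  all_goals have hux := hu₀ x hx; have hvx := hv₀ x hx
  · have huv : u x + v x ≠ 0 := by positivity
    exact (((HasDerivAt.mul_log ((hu x).add (hv x)) huv).sub
      ((hu x).mul_log hux.ne')).sub ((hv x).mul_log hvx.ne')).hasDerivWithinAt
  · have huv : u x + v x ≠ 0 := by positivity
    exact (((HasDerivAt.const_mul_log_add_one ((hu x).add (hv x)) huv).sub
      ((hu x).const_mul_log_add_one hux.ne')).sub
      ((hv x).const_mul_log_add_one hvx.ne')).hasDerivWithinAt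
  · linarith [add_sq_div_add_le hux hvx p q]

theorem stmt_3_general (a b : ℝ) (ha : 0 < a) :
    ConcaveOn ℝ (Set.Ioo (0 : ℝ) b)
      (fun x => (a * (b - x) + x) * Real.log (a * (b - x) + x)
        - a * (b - x) * Real.log (a * (b - x)) - x * Real.log x) := by
  have hu : ∀ x, HasDerivAt (fun x => a * (b - x)) (a * -1) x := fun x =>
    ((hasDerivAt_id x).const_sub b).const_mul a
  refine concaveOn_mul_log_add_sub_mul_log_sub_mul_log (convex_Ioo 0 b) hu hasDerivAt_id
    (fun x hx => ?_) (fun x hx => ?_) <;> rw [interior_Ioo] at hx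
  · exact mul_pos ha (sub_pos.2 hx.2)
  · exact hx.1

/-- x ↦ (a(b-x)+x)log(a(b-x)+x) - a(b-x)log(a(b-x)) - x log x is concave on (0,b). -/
theorem stmt_3 (a b : ℝ) (ha : 0 < a) (hb : 0 < b) :
    ConcaveOn ℝ (Set.Ioo (0 : ℝ) b)
      (fun x => (a * (b - x) + x) * Real.log (a * (b - x) + x)
        - a * (b - x) * Real.log (a * (b - x)) - x * Real.log x) :=
  stmt_3_general a b ha
end

section
/- Let 0 ≤ λ ≤ 1, 0 ≤ d₁ ≤ 1, 0 ≤ d₂ ≤ 1, and let N be a positive integer. Define the joint distribution P(M₁ = m₁, M₂ = m₂) = ∑_{n₁=m₁}^{N-m₂} C(n₁,m₁)·d₁^{n₁-m₁}·(1-d₁)^{m₁}·C(N-n₁,m₂)·d₂^{N-n₁-m₂}·(1-d₂)^{m₂}·C(N,n₁)·λ^{n₁}·(1-λ)^{N-n₁} for m₁ + m₂ ≤ N. Then P(M₁ = m₁, M₂ = m₂) = C(N-m₂, m₁)·C(N, m₂)·(λ(1-d₁))^{m₁}·((1-λ)(1-d₂))^{m₂}·d^{N-m₁-m₂}, where d =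 λd₁ + (1-λ)d₂. -/
/-!
Substituting n₁ = m₁ + k, the three binomial coefficients in each summand combine into the
multinomial coefficient N! / (m₁! k! m₂! (N - m₁ - m₂ - k)!), which factors the other way as
C(N - m₂, m₁) · C(N, m₂) · C(N - m₁ - m₂, k). What remains of the sum is the binomial expansion
of (λ d₁ + (1 - λ) d₂)^(N - m₁ - m₂).
-/

open Finset

theorem Nat.add_choose_mul_add_choose_mul_choose (a b c e : ℕ) :
    (a + b).choose a * (c + e).choose c * (a + (b + e) + c).choose (a + b)
      = (a + (b + e)).choose a * (a + (b + e) + c).choose c * (b + e).choose b := by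
  apply Nat.cast_injective (R := ℚ)
  have h₁ : ((a + (b + e) + c).choose (a + b) : ℚ) = (a + b + (c + e)).choose (a + b) := by
    rw [show a + (b + e) + c = a + b + (c + e) by ring]
  have h₂ : ((a + (b + e) + c).choose c : ℚ) = (c + (a + (b + e))).choose c := by
    rw [add_comm c]
  push_cast
  rw [h₁, h₂]
  simp only [Nat.cast_add_choose]
  rw [show c + (a + (b + e)) = a + b + (c + e) by ring]
  field_simp

theorem stmt_5_general (lam d₁ d₂ : ℝ)
    (N : ℕ) (m₁ m₂ : ℕ) (hm : m₁ + m₂ ≤ N) :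
    ∑ n₁ ∈ Finset.Icc m₁ (N - m₂),
        (n₁.choose m₁ : ℝ) * d₁ ^ (n₁ - m₁) * (1 - d₁) ^ m₁ *
          ((N - n₁).choose m₂ : ℝ) * d₂ ^ (N - n₁ - m₂) * (1 - d₂) ^ m₂ *
          (N.choose n₁ : ℝ) * lam ^ n₁ * (1 - lam) ^ (N - n₁)
      = ((N - m₂).choose m₁ : ℝ) * (N.choose m₂ : ℝ) *
          (lam * (1 - d₁)) ^ m₁ * ((1 - lam) * (1 - d₂)) ^ m₂ *
          (lam * d₁ + (1 - lam) * d₂) ^ (N - m₁ - m₂) := by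
  obtain ⟨K, rfl⟩ : ∃ K, N = m₁ + K + m₂ := ⟨N - m₁ - m₂, by omega⟩
  rw [Nat.add_sub_cancel, show m₁ + K + m₂ - m₁ - m₂ = K by omega, add_pow, mul_sum,
    ← Ico_add_one_right_eq_Icc, sum_Ico_eq_sum_range, show m₁ + K + 1 - m₁ = K + 1 by omega]
  refine sum_congr rfl fun k hk => ?_
  obtain ⟨e, rfl⟩ : ∃ e, K = k + e := ⟨K - k, by grind⟩
  have hchoose := congrArg (Nat.cast (R := ℝ))
    (Nat.add_choose_mul_add_choose_mul_choose m₁ k m₂ e)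
  push_cast at hchoose
  rw [show m₁ + (k + e) + m₂ - (m₁ + k) = m₂ + e by omega, Nat.add_sub_cancel_left,
    Nat.add_sub_cancel_left, Nat.add_sub_cancel_left]
  simp only [mul_pow, pow_add]
  linear_combination (d₁ ^ k * (1 - d₁) ^ m₁ * d₂ ^ e * (1 - d₂) ^ m₂ * lam ^ m₁ * lam ^ k
    * (1 - lam) ^ m₂ * (1 - lam) ^ e) * hchoose

/-- Closed form of the joint distribution P(M₁ = m₁, M₂ = m₂) for two parallel
deletion channels. -/
theorem stmt_5 (lam d₁ d₂ : ℝ) (hl0 : 0 ≤ lam) (hl1 : lam ≤ 1)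
    (hd₁0 : 0 ≤ d₁) (hd₁1 : d₁ ≤ 1) (hd₂0 : 0 ≤ d₂) (hd₂1 : d₂ ≤ 1)
    (N : ℕ) (hN : 0 < N) (m₁ m₂ : ℕ) (hm : m₁ + m₂ ≤ N) :
    ∑ n₁ ∈ Finset.Icc m₁ (N - m₂),
        (n₁.choose m₁ : ℝ) * d₁ ^ (n₁ - m₁) * (1 - d₁) ^ m₁ *
          ((N - n₁).choose m₂ : ℝ) * d₂ ^ (N - n₁ - m₂) * (1 - d₂) ^ m₂ *
          (N.choose n₁ : ℝ) * lam ^ n₁ * (1 - lam) ^ (N - n₁)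
      = ((N - m₂).choose m₁ : ℝ) * (N.choose m₂ : ℝ) *
          (lam * (1 - d₁)) ^ m₁ * ((1 - lam) * (1 - d₂)) ^ m₂ *
          (lam * d₁ + (1 - lam) * d₂) ^ (N - m₁ - m₂) :=
  stmt_5_general lam d₁ d₂ N m₁ m₂ hm
end
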